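/- Let χ₋₄ be the nontrivial Dirichlet character modulo 4. For every positive integer n, Σ_{d² ∣ n} μ(d) Σ_{m ∣ n/d²} χ₋₄(n/(m d²)) m² = (1 − [4∣n]/16) · n² · Π_{p ∣ n prime} (1 + χ₋₄(p)/p²). -/

import Mathlib

/-!
Both sides are multiplicative in `n`. The left side is the Dirichlet convolution of
`d ^ 2 ↦ μ d` (zero off the squares) with `G = χ₋₄ * (m ↦ m ^ 2)`, so on a prime power it is
`G (p ^ k) - G (p ^ (k - 2))`. With `q = p ^ 2` and `c = χ₋₄ p` one has
`G (p ^ (k + 1)) = q ^ (k + 1) + c * G (p ^ k)`, hence the left side at `p ^ (k + 2)` is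
`q ^ (k + 2) + c * q ^ (k + 1) + (c ^ 2 - 1) * G (p ^ k)`. For odd `p`, `c ^ 2 = 1`; for `p = 2`,
`c = 0` and `G (2 ^ k) = 4 ^ k`, which produces the factor `1 - 1 / 16` once `4 ∣ n`.
-/

/-- The nontrivial Dirichlet character modulo 4, as a function on ℕ. -/
def chiFour (m : ℕ) : ℤ :=
  if m % 4 = 1 then 1 else if m % 4 = 3 then -1 else 0

open Finset

theorem Nat.Coprime.isSquare_mul_iff {m n : ℕ} (h : m.Coprime n) :
    IsSquare (m * n) ↔ IsSquare m ∧ IsSquare n := by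
  refine ⟨fun ⟨r, hr⟩ => ?_, fun ⟨hm, hn⟩ => hm.mul hn⟩
  have isSquare_left {a b : ℕ} (hab : a.Coprime b) (h : a * b = r ^ 2) : IsSquare a := by
    obtain ⟨d, hd⟩ := exists_eq_pow_of_mul_eq_pow
      (by rw [gcd_eq_nat_gcd, Nat.isUnit_iff]; exact hab) h
    exact ⟨d, hd.trans (sq d)⟩
  rw [← sq] at hr
  exact ⟨isSquare_left h hr, isSquare_left h.symm ((mul_comm n m).trans hr)⟩

theorem Nat.Prime.not_isSquare_pow_of_odd {p k : ℕ} (hp : p.Prime) (hk : Odd k) :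
    ¬ IsSquare (p ^ k) := by
  rintro ⟨r, hr⟩
  have := congrArg (fun m => m.factorization p) hr
  simp [← sq, Nat.factorization_pow, hp.factorization_self] at this
  obtain ⟨j, rfl⟩ := hk
  omega

namespace ArithmeticFunction

variable {R : Type*}

theorem mul_apply_prime_pow [Semiring R] (f g : ArithmeticFunction R) {p : ℕ}
    (hp : p.Prime) (k : ℕ) :
    (f * g) (p ^ k) = ∑ i ∈ range (k + 1), f (p ^ i) * g (p ^ (k - i)) := by
  rw [mul_apply, Nat.sum_divisorsAntidiagonal (fun a b => f a * g b),
    Nat.sum_divisors_prime_pow hp]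
  refine sum_congr rfl fun i hi => ?_
  rw [Nat.pow_div (Nat.lt_succ_iff.mp (mem_range.mp hi)) hp.pos]

def onSquares [Zero R] (f : ArithmeticFunction R) : ArithmeticFunction R :=
  ⟨fun n => if IsSquare n then f n.sqrt else 0, by simp⟩

theorem onSquares_apply_sq [Zero R] (f : ArithmeticFunction R) (d : ℕ) :
    onSquares f (d ^ 2) = f d := by
  simp [onSquares, Nat.sqrt_eq', IsSquare.sq]

theorem onSquares_apply_of_not_isSquare [Zero R] (f : ArithmeticFunction R) {n : ℕ}
    (hn : ¬ IsSquare n) : onSquares f n = 0 :=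
  if_neg hn

theorem IsMultiplicative.onSquares [MonoidWithZero R] {f : ArithmeticFunction R}
    (hf : f.IsMultiplicative) : f.onSquares.IsMultiplicative := by
  refine ⟨by simpa using (onSquares_apply_sq f 1).trans hf.map_one, fun {m n} hmn => ?_⟩
  by_cases hsq : IsSquare m ∧ IsSquare n
  · obtain ⟨⟨a, rfl⟩, ⟨b, rfl⟩⟩ := hsq
    have hab : a.Coprime b := (Nat.coprime_mul_iff_left.mp (Nat.coprime_mul_iff_right.mp hmn).1).1
    rw [← sq, ← sq, ← mul_pow, onSquares_apply_sq, onSquares_apply_sq, onSquares_apply_sq,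
      hf.map_mul_of_coprime hab]
  · rw [onSquares_apply_of_not_isSquare f (mt hmn.isSquare_mul_iff.mp hsq)]
    rw [not_and_or] at hsq
    rcases hsq with hm | hn
    · rw [onSquares_apply_of_not_isSquare f hm, zero_mul]
    · rw [onSquares_apply_of_not_isSquare f hn, mul_zero]

theorem onSquares_mul_apply [Semiring R] (f g : ArithmeticFunction R) (n : ℕ) :
    (onSquares f * g) n = ∑ d ∈ n.divisors with d ^ 2 ∣ n, f d * g (n / d ^ 2) := by
  rw [mul_apply, Nat.sum_divisorsAntidiagonal (fun a b => onSquares f a * g b)]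
  simp only [onSquares, coe_mk, ite_mul, zero_mul]
  rw [← sum_filter]
  refine sum_nbij' Nat.sqrt (· ^ 2) ?_ ?_ ?_ ?_ ?_
  · rintro a ha
    simp only [mem_filter, Nat.mem_divisors] at ha ⊢
    obtain ⟨⟨han, hn⟩, r, rfl⟩ := ha
    rw [Nat.sqrt_eq, sq]
    exact ⟨⟨Dvd.dvd.trans (dvd_mul_right r r) han, hn⟩, han⟩
  · rintro d hd
    simp only [mem_filter, Nat.mem_divisors] at hd ⊢
    exact ⟨⟨hd.2, hd.1.2⟩, IsSquare.sq d⟩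
  · rintro a ha
    obtain ⟨r, rfl⟩ := (mem_filter.mp ha).2
    simp [Nat.sqrt_eq, sq]
  · rintro d -
    exact Nat.sqrt_eq' d
  · rintro a ha
    obtain ⟨r, rfl⟩ := (mem_filter.mp ha).2
    simp [Nat.sqrt_eq, sq]

end ArithmeticFunction

theorem Nat.Prime.four_dvd_pow_iff {p k : ℕ} (hp : p.Prime) : 4 ∣ p ^ k ↔ p = 2 ∧ 2 ≤ k := by
  refine ⟨fun h => ?_, fun ⟨hp2, hk⟩ => hp2 ▸ pow_dvd_pow 2 hk⟩
  have hp2 : p = 2 := ((Nat.prime_dvd_prime_iff_eq Nat.prime_two hp).mp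
    (Nat.prime_two.dvd_of_dvd_pow ((by norm_num : 2 ∣ 4).trans h))).symm
  subst hp2
  exact ⟨rfl, (Nat.pow_dvd_pow_iff_le_right (by norm_num)).mp h⟩

open ArithmeticFunction

theorem chiFour_eq_χ₄ (m : ℕ) : chiFour m = ZMod.χ₄ m := by
  rw [ZMod.χ₄_nat_eq_if_mod_four, chiFour]
  split_ifs <;> omega

theorem chiFour_mul (m n : ℕ) : chiFour (m * n) = chiFour m * chiFour n := by
  simp only [chiFour_eq_χ₄, Nat.cast_mul, map_mul]

theorem chiFour_sq_of_odd {p : ℕ} (hp : Odd p) : chiFour p ^ 2 = 1 := by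
  have : p % 4 = 1 ∨ p % 4 = 3 := by rcases hp with ⟨k, rfl⟩; omega
  rcases this with h | h <;> simp [chiFour, h]

def chiFourArith : ArithmeticFunction ℤ := ⟨chiFour, rfl⟩

@[simp]
theorem chiFourArith_apply (n : ℕ) : chiFourArith n = chiFour n := rfl

theorem isMultiplicative_chiFourArith : chiFourArith.IsMultiplicative :=
  ⟨rfl, fun _ => chiFour_mul _ _⟩

noncomputable def chiFourConvSq : ArithmeticFunction ℝ :=
  (chiFourArith : ArithmeticFunction ℝ) * (pow 2 : ArithmeticFunction ℕ)

theorem isMultiplicative_chiFourConvSq : chiFourConvSq.IsMultiplicative :=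
  isMultiplicative_chiFourArith.intCast.mul isMultiplicative_pow.natCast

theorem chiFourConvSq_apply (n : ℕ) :
    chiFourConvSq n = ∑ m ∈ n.divisors, (chiFour (n / m) : ℝ) * (m : ℝ) ^ 2 := by
  rw [chiFourConvSq, mul_apply, Nat.sum_divisorsAntidiagonal' fun a b =>
    (chiFourArith : ArithmeticFunction ℝ) a *
      ((pow 2 : ArithmeticFunction ℕ) : ArithmeticFunction ℝ) b]
  simp

theorem chiFourConvSq_apply_prime_pow_succ {p : ℕ} (hp : p.Prime) (k : ℕ) :
    chiFourConvSq (p ^ (k + 1)) =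
      ((p : ℝ) ^ 2) ^ (k + 1) + chiFour p * chiFourConvSq (p ^ k) := by
  rw [chiFourConvSq, mul_apply_prime_pow _ _ hp, mul_apply_prime_pow _ _ hp, sum_range_succ',
    mul_sum, add_comm]
  simp [pow_succ', chiFour_mul, show chiFour 1 = 1 from rfl]
  ring_nf

theorem chiFourConvSq_apply_two_pow (k : ℕ) : chiFourConvSq (2 ^ k) = (4 : ℝ) ^ k := by
  induction k with
  | zero => simp [isMultiplicative_chiFourConvSq.map_one]
  | succ k _ =>
    rw [chiFourConvSq_apply_prime_pow_succ Nat.prime_two, show chiFour 2 = 0 from rfl]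
    norm_num

theorem onSquares_moebius_apply_prime_pow {p : ℕ} (hp : p.Prime) (i : ℕ) :
    onSquares (moebius : ArithmeticFunction ℝ) (p ^ i) =
      if i = 0 then 1 else if i = 2 then -1 else 0 := by
  obtain ⟨e, rfl | rfl⟩ := Nat.even_or_odd' i
  · rw [pow_mul', onSquares_apply_sq, intCoe_apply]
    rcases e with _ | _ | e
    · simp
    · simp [moebius_apply_prime hp]
    · simp [moebius_apply_prime_pow hp]
  · rw [onSquares_apply_of_not_isSquare _ (hp.not_isSquare_pow_of_odd (odd_two_mul_add_one e))]
    simp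

theorem onSquares_moebius_mul_chiFourConvSq_apply_prime {p : ℕ} (hp : p.Prime) :
    (onSquares (moebius : ArithmeticFunction ℝ) * chiFourConvSq) p = chiFourConvSq p := by
  simpa [sum_range_succ, onSquares_moebius_apply_prime_pow hp] using
    mul_apply_prime_pow (onSquares (moebius : ArithmeticFunction ℝ)) chiFourConvSq hp 1

theorem onSquares_moebius_mul_chiFourConvSq_apply_prime_pow_add_two {p : ℕ} (hp : p.Prime)
    (k : ℕ) :
    (onSquares (moebius : ArithmeticFunction ℝ) * chiFourConvSq) (p ^ (k + 2)) =
      chiFourConvSq (p ^ (k + 2)) - chiFourConvSq (p ^ k) := by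
  rw [mul_apply_prime_pow _ _ hp]
  simp [sum_range_succ', onSquares_moebius_apply_prime_pow hp]
  ring

noncomputable def fourDvdFactor : ArithmeticFunction ℝ :=
  ⟨fun n => if n = 0 then 0 else 1 - (if 4 ∣ n then 1 else 0) / 16, if_pos rfl⟩

theorem fourDvdFactor_apply {n : ℕ} (hn : n ≠ 0) :
    fourDvdFactor n = 1 - (if 4 ∣ n then 1 else 0) / 16 :=
  if_neg hn

theorem isMultiplicative_fourDvdFactor : fourDvdFactor.IsMultiplicative := by
  have mul_of_odd {m n : ℕ} (hm : m ≠ 0) (hn : n ≠ 0) (hodd : ¬ 2 ∣ n) :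
      fourDvdFactor (m * n) = fourDvdFactor m * fourDvdFactor n := by
    have h4n : Nat.Coprime 4 n :=
      Nat.Coprime.pow_left 2 ((Nat.Prime.coprime_iff_not_dvd Nat.prime_two).mpr hodd)
    have h4n' : ¬ 4 ∣ n := fun h => hodd ((by norm_num : 2 ∣ 4).trans h)
    simp only [fourDvdFactor_apply (mul_ne_zero hm hn), fourDvdFactor_apply hm,
      fourDvdFactor_apply hn, h4n.dvd_mul_right, h4n', if_false]
    ring
  rw [IsMultiplicative.iff_ne_zero]
  refine ⟨by simp [fourDvdFactor_apply], fun {m n} hm hn hmn => ?_⟩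
  by_cases hodd : 2 ∣ n
  · have hm_odd : ¬ 2 ∣ m := fun h => Nat.not_coprime_of_dvd_of_dvd one_lt_two h hodd hmn
    rw [mul_comm, mul_of_odd hn hm hm_odd, mul_comm]
  · exact mul_of_odd hm hn hodd

noncomputable def chiFourClosedForm : ArithmeticFunction ℝ :=
  (fourDvdFactor.pmul (pow 2 : ArithmeticFunction ℕ)).pmul
    (prodPrimeFactors fun p => 1 + (chiFour p : ℝ) / (p : ℝ) ^ 2)

theorem isMultiplicative_chiFourClosedForm : chiFourClosedForm.IsMultiplicative :=
  (isMultiplicative_fourDvdFactor.pmul isMultiplicative_pow.natCast).pmul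
    (IsMultiplicative.prodPrimeFactors _)

theorem chiFourClosedForm_apply (n : ℕ) :
    chiFourClosedForm n = (1 - (if 4 ∣ n then 1 else 0) / 16) * (n : ℝ) ^ 2 *
        ∏ p ∈ n.primeFactors, (1 + (chiFour p : ℝ) / (p : ℝ) ^ 2) := by
  rcases eq_or_ne n 0 with rfl | hn
  · simp
  · simp [chiFourClosedForm, fourDvdFactor_apply hn, hn]

theorem chiFourClosedForm_apply_prime_pow_succ {p : ℕ} (hp : p.Prime) (k : ℕ) :
    chiFourClosedForm (p ^ (k + 1)) = (1 - (if p = 2 ∧ 2 ≤ k + 1 then 1 else 0) / 16) *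
      (((p : ℝ) ^ 2) ^ (k + 1) + chiFour p * ((p : ℝ) ^ 2) ^ k) := by
  have hp0 : (p : ℝ) ≠ 0 := by exact_mod_cast hp.ne_zero
  rw [chiFourClosedForm_apply, Nat.primeFactors_prime_pow k.succ_ne_zero hp, prod_singleton]
  simp only [hp.four_dvd_pow_iff, Nat.cast_pow]
  field_simp
  ring

theorem onSquares_moebius_mul_chiFourConvSq :
    onSquares (moebius : ArithmeticFunction ℝ) * chiFourConvSq = chiFourClosedForm := by
  have hF := isMultiplicative_moebius.intCast.onSquares.mul isMultiplicative_chiFourConvSq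
  refine (IsMultiplicative.eq_iff_eq_on_prime_powers _ hF _
    isMultiplicative_chiFourClosedForm).mpr fun p k hp => ?_
  have hG := chiFourConvSq_apply_prime_pow_succ hp
  rcases k with _ | _ | k
  · rw [pow_zero, isMultiplicative_chiFourClosedForm.map_one, hF.map_one]
  · have hC := chiFourClosedForm_apply_prime_pow_succ hp 0
    have hG₁ := hG 0
    simp only [zero_add, pow_one, pow_zero, isMultiplicative_chiFourConvSq.map_one] at hC hG₁ ⊢
    rw [onSquares_moebius_mul_chiFourConvSq_apply_prime hp, hC, hG₁]
    norm_num
  · rw [onSquares_moebius_mul_chiFourConvSq_apply_prime_pow_add_two hp,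
      chiFourClosedForm_apply_prime_pow_succ hp, hG, hG]
    rcases eq_or_ne p 2 with rfl | hp2
    · rw [chiFourConvSq_apply_two_pow, show chiFour 2 = 0 from rfl]
      norm_num
      ring
    · have hc : (chiFour p : ℝ) ^ 2 = 1 := mod_cast chiFour_sq_of_odd (hp.odd_of_ne_two hp2)
      simp only [hp2, false_and, if_false]
      linear_combination (chiFourConvSq (p ^ k)) * hc

theorem stmt_10_general (n : ℕ) :
    ∑ d ∈ n.divisors.filter (fun d => d ^ 2 ∣ n),
        (ArithmeticFunction.moebius d : ℝ) *
          ∑ m ∈ (n / d ^ 2).divisors, (chiFour (n / (m * d ^ 2)) : ℝ) * (m : ℝ) ^ 2 =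
      (1 - (if 4 ∣ n then 1 else 0) / 16) * (n : ℝ) ^ 2 *
        ∏ p ∈ n.primeFactors, (1 + (chiFour p : ℝ) / (p : ℝ) ^ 2) := by
  have h := congrArg (· n) onSquares_moebius_mul_chiFourConvSq
  simp only [onSquares_mul_apply, chiFourConvSq_apply, chiFourClosedForm_apply, intCoe_apply] at h
  rw [← h]
  refine sum_congr rfl fun d _ => ?_
  simp only [Nat.div_div_eq_div_mul, mul_comm]

theorem stmt_10 (n : ℕ) (hn : 0 < n) :
    ∑ d ∈ n.divisors.filter (fun d => d ^ 2 ∣ n),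
        (ArithmeticFunction.moebius d : ℝ) *
          ∑ m ∈ (n / d ^ 2).divisors, (chiFour (n / (m * d ^ 2)) : ℝ) * (m : ℝ) ^ 2 =
      (1 - (if 4 ∣ n then 1 else 0) / 16) * (n : ℝ) ^ 2 *
        ∏ p ∈ n.primeFactors, (1 + (chiFour p : ℝ) / (p : ℝ) ^ 2) :=
  stmt_10_general n
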